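/- arXiv:1701.02651 — 6 statements merged into one kernel-verified Lean document; each statement's English description precedes it below -/
import Mathlib

section
/- Let U⃗ be a universe of separations with an order function, k a positive integer, and S⃗_k = {s ∈ U⃗ : ord(s) < k}. Then S⃗_k is separable: for all nontrivial, nondegenerate r, r' ∈ S⃗_k with r ≤ r', there exists s₀ ∈ S⃗_k with r ≤ s₀ ≤ r' such that s₀ emulates r in S⃗_k and s₀* emulates r' in S⃗_k. In fact any s₀ of minimum order with r ≤ s₀ ≤ r' works. -/
/-- `r` is trivial in the separation system `S` (a subset of a universe,
closed under the involution): some `s ∈ S` whose underlying separation is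
distinct from that of `r` satisfies `r < s` and `r < s*`. -/
def TrivialIn {U : Type*} [Lattice U] (inv : U → U) (S : Set U) (r : U) : Prop :=
  ∃ s ∈ S, ({s, inv s} : Set U) ≠ {r, inv r} ∧ r < s ∧ r < inv s

/-- `s₀` emulates `r` in `S`: `s₀ ∈ S`, `r ≤ s₀`, and for every `s ∈ S \ {r*}`
with `r ≤ s` we have `s ⊔ s₀ ∈ S`. -/
def Emulates {U : Type*} [Lattice U] (inv : U → U) (S : Set U) (r s₀ : U) : Prop :=
  s₀ ∈ S ∧ r ≤ s₀ ∧ ∀ s ∈ S, s ≠ inv r → r ≤ s → s ⊔ s₀ ∈ S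

/-- Let `U` be a universe of separations with an order
function and `S⃗_k = {s : ord s < k}` for a positive integer `k`. Then `S⃗_k`
is separable: for all nontrivial, nondegenerate `r ≤ r'` in `S⃗_k` (with `r`
and the inverse orientation of `r'` nontrivial) there exists `s₀ ∈ S⃗_k` with
`r ≤ s₀ ≤ r'` such that `s₀` emulates `r` in `S⃗_k` and `s₀*` emulates the
inverse of `r'` in `S⃗_k`. In fact any `s₀` of minimum order with
`r ≤ s₀ ≤ r'` works. -/
theorem Sk_separable {U : Type*} [Lattice U] [Finite U] (inv : U → U)
    (hinv : ∀ s, inv (inv s) = s)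
    (hrev : ∀ r s : U, r ≤ s ↔ inv s ≤ inv r)
    (ord : U → ℝ)
    (hnonneg : ∀ s, 0 ≤ ord s)
    (hsym : ∀ s, ord (inv s) = ord s)
    (hsubmod : ∀ r s : U, ord (r ⊔ s) + ord (r ⊓ s) ≤ ord r + ord s)
    (k : ℕ) (hk : 0 < k)
    (r r' : U) (hr : ord r < k) (hr' : ord r' < k)
    (hndr : r ≠ inv r) (hndr' : r' ≠ inv r')
    (hntr : ¬ TrivialIn inv {s : U | ord s < k} r)
    (hntr' : ¬ TrivialIn inv {s : U | ord s < k} (inv r'))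
    (hle : r ≤ r') :
    (∃ s₀ : U, ord s₀ < k ∧ r ≤ s₀ ∧ s₀ ≤ r' ∧
      Emulates inv {s : U | ord s < k} r s₀ ∧
      Emulates inv {s : U | ord s < k} (inv r') (inv s₀)) ∧
    (∀ s₀ : U, r ≤ s₀ → s₀ ≤ r' → (∀ t : U, r ≤ t → t ≤ r' → ord s₀ ≤ ord t) →
      ord s₀ < k ∧
      Emulates inv {s : U | ord s < k} r s₀ ∧
      Emulates inv {s : U | ord s < k} (inv r') (inv s₀)) := by
  have hanti : ∀ a b : U, a ≤ b → inv b ≤ inv a := fun a b h => (hrev a b).1 h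
  have hinf : ∀ a b : U, inv (a ⊓ b) = inv a ⊔ inv b := by
    intro a b
    apply le_antisymm
    · have h1 : inv (inv a ⊔ inv b) ≤ a := by
        have := hanti _ _ (le_sup_left (a := inv a) (b := inv b))
        rwa [hinv] at this
      have h2 : inv (inv a ⊔ inv b) ≤ b := by
        have := hanti _ _ (le_sup_right (a := inv a) (b := inv b))
        rwa [hinv] at this
      have := hanti _ _ (le_inf h1 h2)
      rwa [hinv] at this
    · exact sup_le (hanti _ _ inf_le_left) (hanti _ _ inf_le_right)
  have main : ∀ s₀ : U, r ≤ s₀ → s₀ ≤ r' → (∀ t : U, r ≤ t → t ≤ r' → ord s₀ ≤ ord t) →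
      ord s₀ < k ∧
      Emulates inv {s : U | ord s < k} r s₀ ∧
      Emulates inv {s : U | ord s < k} (inv r') (inv s₀) := by
    intro s₀ h1 h2 hmin
    have hs₀k : ord s₀ < k := lt_of_le_of_lt (hmin r le_rfl hle) hr
    refine ⟨hs₀k, ⟨hs₀k, h1, ?_⟩, ⟨by simpa [hsym] using hs₀k, hanti _ _ h2, ?_⟩⟩
    · intro s hs hne hrs
      have hsub := hsubmod s s₀
      have hlow : ord s₀ ≤ ord (s ⊓ s₀) :=
        hmin _ (le_inf hrs h1) (le_trans inf_le_right h2)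
      have : ord (s ⊔ s₀) ≤ ord s := by linarith
      exact lt_of_le_of_lt this hs
    · intro s hs hne hrs
      have hisr' : inv s ≤ r' := by
        have := hanti _ _ hrs; rwa [hinv] at this
      have hsub := hsubmod (inv s) s₀
      have hlow : ord s₀ ≤ ord (inv s ⊔ s₀) :=
        hmin _ (le_trans h1 le_sup_right) (sup_le hisr' h2)
      have hle2 : ord (inv s ⊓ s₀) ≤ ord (inv s) := by linarith
      have heq : inv (inv s ⊓ s₀) = s ⊔ inv s₀ := by rw [hinf, hinv]
      have : ord (s ⊔ inv s₀) < k := by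
        rw [← heq, hsym]
        calc ord (inv s ⊓ s₀) ≤ ord (inv s) := hle2
          _ = ord s := hsym s
          _ < k := hs
      exact this
  refine ⟨?_, main⟩
  obtain ⟨s₀, ⟨h1, h2⟩, hmin⟩ := Set.exists_min_image {t : U | r ≤ t ∧ t ≤ r'} ord
    (Set.toFinite _) ⟨r, le_rfl, hle⟩
  obtain ⟨hk, he1, he2⟩ := main s₀ h1 h2 (fun t ht1 ht2 => hmin t ⟨ht1, ht2⟩)
  exact ⟨s₀, hk, h1, h2, he1, he2⟩
end

section
/- Let r be a nontrivial, nondegenerate oriented separation in a separation system S⃗ inside a universe U⃗, and let s₀ ∈ S⃗ with r ≤ s₀. Then the shifting map f, defined on oriented separations s ≥ r in S⃗ (excluding r*) by f(s) = s ∨ s₀ and f(s*) = (s ∨ s₀)*, preserves the partial ordering ≤ on its domain. In particular, f maps stars contained in its domain to stars. -/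
/-- The shifting map `f↓(r, s₀)`: on separations `x ≥ r` it is `x ⊔ s₀`, and on
inverses of such (i.e. `x` with `r ≤ x*`) it is `(x* ⊔ s₀)*`. -/
noncomputable def shiftMap {U : Type*} [Lattice U] (inv : U → U) (r s₀ : U) (x : U) : U := by
  classical exact if r ≤ x then x ⊔ s₀ else inv (inv x ⊔ s₀)

/-- A star: a set of nondegenerate oriented separations pointing towards each
other (`x ≤ y*` for distinct elements). -/
def IsStar {U : Type*} [Lattice U] (inv : U → U) (σ : Set U) : Prop :=
  (∀ x ∈ σ, x ≠ inv x) ∧ ∀ x ∈ σ, ∀ y ∈ σ, x ≠ y → x ≤ inv y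

/-- Let `r` be a nontrivial, nondegenerate oriented
separation of a separation system `S` inside a universe `U`, and `s₀ ∈ S` with
`r ≤ s₀`. Then the shifting map `f↓(r,s₀)` preserves the ordering `≤` on
`S⃗_{≥ r} \ {r*}` (the orientations of separations of `S` having an orientation
`≥ r`, minus `r*`). In particular it maps stars contained in this domain to
stars. -/
theorem shiftMap_orderPreserving_and_maps_stars {U : Type*} [Lattice U] (inv : U → U)
    (hinv : ∀ s, inv (inv s) = s)
    (hrev : ∀ r s : U, r ≤ s ↔ inv s ≤ inv r)
    (S : Set U) (hS : ∀ s ∈ S, inv s ∈ S)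
    (r : U) (hrS : r ∈ S)
    (hnontriv : ¬ TrivialIn inv S r) (hnondeg : r ≠ inv r)
    (s₀ : U) (hs₀S : s₀ ∈ S) (hrs₀ : r ≤ s₀) :
    (∀ x ∈ {x ∈ S | (r ≤ x ∨ r ≤ inv x) ∧ x ≠ inv r},
      ∀ y ∈ {x ∈ S | (r ≤ x ∨ r ≤ inv x) ∧ x ≠ inv r},
        x ≤ y → shiftMap inv r s₀ x ≤ shiftMap inv r s₀ y) ∧
    (∀ σ : Set U, σ ⊆ {x ∈ S | (r ≤ x ∨ r ≤ inv x) ∧ x ≠ inv r} →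
      IsStar inv σ → IsStar inv (shiftMap inv r s₀ '' σ)) := by
  classical
  have hmono : ∀ a b : U, a ≤ b → inv b ≤ inv a := fun a b h => (hrev a b).mp h
  have hdef : ∀ x : U, shiftMap inv r s₀ x
      = if r ≤ x then x ⊔ s₀ else inv (inv x ⊔ s₀) := fun x => by
    simp [shiftMap]
  have claim : ∀ y ∈ S, y ≠ inv r → r ≤ y → r ≤ inv y → y = r := by
    intro y hyS hyr h1 h2
    by_cases hset : ({y, inv y} : Set U) = {r, inv r}
    · have hy : y ∈ ({r, inv r} : Set U) := hset ▸ (by simp)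
      rcases hy with h | h
      · exact h
      · exact absurd h hyr
    · by_contra hne
      apply hnontriv
      refine ⟨y, hyS, hset, lt_of_le_of_ne h1 (fun h => hne h.symm), ?_⟩
      refine lt_of_le_of_ne h2 (fun h => hyr ?_)
      rw [h, hinv]
  have hkey : ∀ x ∈ S, r ≤ x → x ≠ inv x → x ≠ inv r → x ⊔ s₀ ≠ inv (x ⊔ s₀) := by
    intro x hxS hrx hxdeg hxr heq
    have hs₀le : s₀ ≤ inv s₀ := by
      have h1 : s₀ ≤ inv (x ⊔ s₀) := heq ▸ le_sup_right
      exact h1.trans (hmono _ _ le_sup_right)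
    have hs₀cases : s₀ = r ∨ s₀ = inv r := by
      by_cases hset : ({s₀, inv s₀} : Set U) = {r, inv r}
      · have hy : s₀ ∈ ({r, inv r} : Set U) := hset ▸ (by simp)
        simpa using hy
      · by_contra hc
        push_neg at hc
        apply hnontriv
        refine ⟨s₀, hs₀S, hset, lt_of_le_of_ne hrs₀ (fun h => hc.1 h.symm), ?_⟩
        refine lt_of_le_of_ne (hrs₀.trans hs₀le) (fun h => hc.2 ?_)
        rw [h, hinv]
    rcases hs₀cases with h | h
    · subst h
      rw [sup_eq_left.mpr hrx] at heq
      exact hxdeg heq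
    · have hrinv : r ≤ inv r := h ▸ hrs₀
      have hs₀invx : s₀ ≤ inv x := by
        have h1 : s₀ ≤ inv (x ⊔ s₀) := heq ▸ le_sup_right
        exact h1.trans (hmono _ _ le_sup_left)
      have hxler : x ≤ r := (hrev x r).mpr (h ▸ hs₀invx)
      have hxr' : x = r := le_antisymm hxler hrx
      subst hxr'
      rw [h, sup_eq_right.mpr hrinv, hinv] at heq
      exact hnondeg heq.symm
  constructor
  · rintro x ⟨hxS, hxor, hxne⟩ y ⟨hyS, hyor, hyne⟩ hxy
    rw [hdef, hdef]
    by_cases hx1 : r ≤ x <;> by_cases hy1 : r ≤ y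
    · rw [if_pos hx1, if_pos hy1]
      exact sup_le_sup_right hxy s₀
    · exact absurd (hx1.trans hxy) hy1
    · rw [if_neg hx1, if_pos hy1]
      have h1 : inv (inv x ⊔ s₀) ≤ x := by
        have := hmono _ _ (le_sup_left : inv x ≤ inv x ⊔ s₀)
        rwa [hinv] at this
      exact (h1.trans hxy).trans le_sup_left
    · rw [if_neg hx1, if_neg hy1]
      exact hmono _ _ (sup_le_sup_right (hmono _ _ hxy) s₀)
  · rintro σ hσ ⟨hσ1, hσ2⟩
    constructor
    · rintro z ⟨x, hxσ, rfl⟩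
      obtain ⟨hxS, hxor, hxne⟩ := hσ hxσ
      rw [hdef]
      by_cases hx1 : r ≤ x
      · rw [if_pos hx1]
        exact hkey x hxS hx1 (hσ1 x hxσ) hxne
      · rw [if_neg hx1, hinv]
        have hr2 : r ≤ inv x := hxor.resolve_left hx1
        have hxr : x ≠ r := fun h => hx1 (h ▸ le_refl r)
        have h1 : inv x ≠ inv (inv x) := by rw [hinv]; exact fun h => hσ1 x hxσ h.symm
        have h2 : inv x ≠ inv r := fun h => hxr (by rw [← hinv x, h, hinv])
        exact fun h => hkey (inv x) (hS x hxS) hr2 h1 h2 h.symm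
    · rintro u ⟨x, hxσ, rfl⟩ v ⟨y, hyσ, rfl⟩ huv
      have hxy : x ≠ y := fun h => huv (h ▸ rfl)
      obtain ⟨hxS, hxor, hxne⟩ := hσ hxσ
      obtain ⟨hyS, hyor, hyne⟩ := hσ hyσ
      have hstar : x ≤ inv y := hσ2 x hxσ y hyσ hxy
      have hstar' : y ≤ inv x := hσ2 y hyσ x hxσ (Ne.symm hxy)
      rw [hdef, hdef]
      by_cases hx1 : r ≤ x <;> by_cases hy1 : r ≤ y
      · exfalso
        have hy' : y = r := claim y hyS hyne hy1 (hx1.trans hstar)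
        have hx' : x = r := claim x hxS hxne hx1 (hy1.trans hstar')
        exact hxy (hx'.trans hy'.symm)
      · rw [if_pos hx1, if_neg hy1, hinv]
        exact sup_le_sup_right hstar s₀
      · rw [if_neg hx1, if_pos hy1]
        exact hmono _ _ (sup_le_sup_right hstar' s₀)
      · rw [if_neg hx1, if_neg hy1, hinv]
        have h1 : inv (inv x ⊔ s₀) ≤ x := by
          have := hmono _ _ (le_sup_left : inv x ≤ inv x ⊔ s₀)
          rwa [hinv] at this
        exact (h1.trans hstar).trans le_sup_left
end

section
/- Let G be a graph, k > 0, and let T be the set of all triples {(A₁,B₁),(A₂,B₂),(A₃,B₃)} of oriented vertex separations of G with G[A₁] ∪ G[A₂] ∪ G[A₃] = G. Every consistent orientation O of S_k (the separations of order < k) avoiding the subfamily T* of stars in T also avoids T, provided |V(G)| ≥ k. -/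
variable {V : Type*}

/-- The inverse of an oriented separation: `(A,B) ↦ (B,A)`. -/
def sInv (p : Set V × Set V) : Set V × Set V := (p.2, p.1)

/-- `(A,B) ≤ (C,D)` iff `A ⊆ C` and `B ⊇ D`. -/
def sLe (p q : Set V × Set V) : Prop := p.1 ⊆ q.1 ∧ q.2 ⊆ p.2

/-- Strict version of `sLe`. -/
def sLt (p q : Set V × Set V) : Prop := sLe p q ∧ p ≠ q

/-- `(A,B)` is an (oriented) vertex separation of the graph `G`:
`A ∪ B = V` and `G` has no edge between `A \ B` and `B \ A`. -/
def GIsSep (G : SimpleGraph V) (p : Set V × Set V) : Prop :=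
  p.1 ∪ p.2 = Set.univ ∧
    ∀ a b : V, a ∈ p.1 → a ∉ p.2 → b ∈ p.2 → b ∉ p.1 → ¬ G.Adj a b

/-- The order `|A ∩ B|` of a separation `(A,B)`. -/
noncomputable def sOrd (p : Set V × Set V) : ℕ := (p.1 ∩ p.2).ncard

/-- `S⃗_k`: the oriented vertex separations of `G` of order `< k`. -/
def Sk (G : SimpleGraph V) (k : ℕ) : Set (Set V × Set V) :=
  {p | GIsSep G p ∧ sOrd p < k}

/-- A star of oriented separations: nondegenerate, pointing towards each other. -/
def IsStarP (σ : Set (Set V × Set V)) : Prop :=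
  (∀ p ∈ σ, p ≠ sInv p) ∧ ∀ p ∈ σ, ∀ q ∈ σ, p ≠ q → sLe p (sInv q)

/-- `O` is an orientation of `S`: `O ⊆ S` contains exactly one orientation of
each separation in `S`. -/
def IsOrientation (S O : Set (Set V × Set V)) : Prop :=
  O ⊆ S ∧ (∀ p ∈ S, p ∈ O ∨ sInv p ∈ O) ∧ ∀ p ∈ O, p ≠ sInv p → sInv p ∉ O

/-- `O` is consistent: it contains no orientations `p* , q` with `p < q` of
distinct underlying separations. -/
def Consistent (O : Set (Set V × Set V)) : Prop :=
  ¬ ∃ p q : Set V × Set V, ({p, sInv p} : Set (Set V × Set V)) ≠ {q, sInv q} ∧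
      sLt p q ∧ sInv p ∈ O ∧ q ∈ O

/-- `O` avoids the family `F`: no subset of `O` lies in `F`. -/
def Avoids (O : Set (Set V × Set V)) (F : Set (Set (Set V × Set V))) : Prop :=
  ¬ ∃ σ ∈ F, σ ⊆ O

/-- The family `T` of Robertson–Seymour: all (≤3-element) sets
`{p₁,p₂,p₃}` of oriented separations with `G[A₁] ∪ G[A₂] ∪ G[A₃] = G`. -/
def Tfam (G : SimpleGraph V) : Set (Set (Set V × Set V)) :=
  {σ | ∃ p₁ p₂ p₃ : Set V × Set V, GIsSep G p₁ ∧ GIsSep G p₂ ∧ GIsSep G p₃ ∧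
    σ = {p₁, p₂, p₃} ∧ p₁.1 ∪ p₂.1 ∪ p₃.1 = Set.univ ∧
    ∀ u v : V, G.Adj u v →
      (u ∈ p₁.1 ∧ v ∈ p₁.1) ∨ (u ∈ p₂.1 ∧ v ∈ p₂.1) ∨ (u ∈ p₃.1 ∧ v ∈ p₃.1)}

/-! ### Auxiliary material for the proof -/

/-- The joint condition from `Tfam`, as a predicate on an ordered triple. -/
def Tcond (G : SimpleGraph V) (x y z : Set V × Set V) : Prop :=
  x.1 ∪ y.1 ∪ z.1 = Set.univ ∧
    ∀ u v : V, G.Adj u v →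
      (u ∈ x.1 ∧ v ∈ x.1) ∨ (u ∈ y.1 ∧ v ∈ y.1) ∨ (u ∈ z.1 ∧ v ∈ z.1)

lemma Tcond_swap12 {G : SimpleGraph V} {x y z : Set V × Set V}
    (h : Tcond G x y z) : Tcond G y x z := by
  obtain ⟨h1, h2⟩ := h
  refine ⟨by rw [Set.union_comm y.1 x.1]; exact h1, fun u v hadj => ?_⟩
  rcases h2 u v hadj with h | h | h <;> tauto

lemma Tcond_swap23 {G : SimpleGraph V} {x y z : Set V × Set V}
    (h : Tcond G x y z) : Tcond G x z y := by
  obtain ⟨h1, h2⟩ := h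
  refine ⟨by rw [Set.union_right_comm]; exact h1, fun u v hadj => ?_⟩
  rcases h2 u v hadj with h | h | h <;> tauto

lemma sep_inv {G : SimpleGraph V} {p : Set V × Set V} (h : GIsSep G p) :
    GIsSep G (sInv p) := by
  refine ⟨by rw [show (sInv p).1 = p.2 from rfl, show (sInv p).2 = p.1 from rfl,
    Set.union_comm]; exact h.1, fun a b ha hna hb hnb hadj => ?_⟩
  exact h.2 b a hb hnb ha hna hadj.symm

lemma sep_corner {G : SimpleGraph V} {x y : Set V × Set V}
    (hx : GIsSep G x) (hy : GIsSep G y) :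
    GIsSep G (x.1 ∩ y.1, x.2 ∪ y.2) := by
  constructor
  · apply Set.eq_univ_of_forall
    intro v
    have hvx : v ∈ x.1 ∪ x.2 := by rw [hx.1]; trivial
    have hvy : v ∈ y.1 ∪ y.2 := by rw [hy.1]; trivial
    simp only [Set.mem_union, Set.mem_inter_iff] at *
    tauto
  · intro a b ha hna hb hnb hadj
    simp only [Set.mem_union, Set.mem_inter_iff, not_or, not_and_or] at ha hna hb hnb
    have hbx : b ∈ x.1 ∪ x.2 := by rw [hx.1]; trivial
    have hby : b ∈ y.1 ∪ y.2 := by rw [hy.1]; trivial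
    simp only [Set.mem_union] at hbx hby
    rcases hnb with hnb | hnb
    · exact hx.2 a b ha.1 hna.1 (hbx.resolve_left hnb) hnb hadj
    · exact hy.2 a b ha.2 hna.2 (hby.resolve_left hnb) hnb hadj

lemma submod [Fintype V] (A B C D : Set V) :
    ((A ∩ D) ∩ (B ∪ C)).ncard + ((C ∩ B) ∩ (D ∪ A)).ncard ≤
      (A ∩ B).ncard + (C ∩ D).ncard := by
  set S := (A ∩ D) ∩ (B ∪ C)
  set T := (C ∩ B) ∩ (D ∪ A)
  have h1 : S ∪ T ⊆ (A ∩ B) ∪ (C ∩ D) := by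
    intro v hv
    simp only [S, T, Set.mem_union, Set.mem_inter_iff] at hv ⊢
    tauto
  have h2 : S ∩ T ⊆ (A ∩ B) ∩ (C ∩ D) := by
    intro v hv
    simp only [S, T, Set.mem_union, Set.mem_inter_iff] at hv ⊢
    tauto
  have e1 := Set.ncard_union_add_ncard_inter S T
  have e2 := Set.ncard_union_add_ncard_inter (A ∩ B) (C ∩ D)
  have l1 : (S ∪ T).ncard ≤ ((A ∩ B) ∪ (C ∩ D)).ncard :=
    Set.ncard_le_ncard h1 (Set.toFinite _)
  have l2 : (S ∩ T).ncard ≤ ((A ∩ B) ∩ (C ∩ D)).ncard :=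
    Set.ncard_le_ncard h2 (Set.toFinite _)
  omega

lemma edge_shift {G : SimpleGraph V} {q : Set V × Set V} (hq : GIsSep G q)
    {s : Set V} {u v : V} (hu : u ∈ s) (hv : v ∈ s) (hadj : G.Adj u v) :
    (u ∈ s ∩ q.2 ∧ v ∈ s ∩ q.2) ∨ (u ∈ q.1 ∧ v ∈ q.1) := by
  have huu : u ∈ q.1 ∨ u ∈ q.2 := by
    have : u ∈ q.1 ∪ q.2 := by rw [hq.1]; trivial
    simpa using this
  have hvv : v ∈ q.1 ∨ v ∈ q.2 := by
    have : v ∈ q.1 ∪ q.2 := by rw [hq.1]; trivial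
    simpa using this
  by_cases h2u : u ∈ q.2 <;> by_cases h2v : v ∈ q.2
  · exact Or.inl ⟨⟨hu, h2u⟩, ⟨hv, h2v⟩⟩
  · refine Or.inr ⟨?_, hvv.resolve_right h2v⟩
    by_contra h1u
    exact hq.2 v u (hvv.resolve_right h2v) h2v h2u h1u hadj.symm
  · refine Or.inr ⟨huu.resolve_right h2u, ?_⟩
    by_contra h1v
    exact hq.2 u v (huu.resolve_right h2u) h2u h2v h1v hadj
  · exact Or.inr ⟨huu.resolve_right h2u, hvv.resolve_right h2v⟩

/-- Measure of a separation: `|A| + |V ∖ B|`. -/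
noncomputable def mA (p : Set V × Set V) : ℕ := p.1.ncard + (p.2ᶜ).ncard

section main
variable [Fintype V] {G : SimpleGraph V} {k : ℕ} {O : Set (Set V × Set V)}

lemma ne_inv (hcard : k ≤ Fintype.card V)
    (horient : IsOrientation (Sk G k) O) {x : Set V × Set V} (hx : x ∈ O) :
    x ≠ sInv x := by
  intro h
  have h1 : x.1 = x.2 := congrArg Prod.fst h
  obtain ⟨hsep, hord⟩ := horient.1 hx
  have h2 : x.1 = Set.univ := by
    have := hsep.1
    rw [← h1, Set.union_self] at this
    exact this
  have h3 : sOrd x = Fintype.card V := by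
    unfold sOrd
    rw [← h1, Set.inter_self, h2, Set.ncard_univ, Nat.card_eq_fintype_card]
  omega

lemma fst_ne_univ (hcard : k ≤ Fintype.card V)
    (horient : IsOrientation (Sk G k) O)
    (havoid : Avoids O {σ | σ ∈ Tfam G ∧ IsStarP σ})
    {x : Set V × Set V} (hx : x ∈ O) : x.1 ≠ Set.univ := by
  intro h
  obtain ⟨hsep, _⟩ := horient.1 hx
  apply havoid
  refine ⟨{x}, ⟨⟨x, x, x, hsep, hsep, hsep, by simp, by rw [h]; simp,
    fun u v _ => Or.inl ⟨by rw [h]; trivial, by rw [h]; trivial⟩⟩, ?_⟩,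
    Set.singleton_subset_iff.mpr hx⟩
  constructor
  · intro p hp
    rw [Set.mem_singleton_iff] at hp
    subst hp
    exact ne_inv hcard horient hx
  · intro p hp q hq hne
    rw [Set.mem_singleton_iff] at hp hq
    exact absurd (hp.trans hq.symm) hne

lemma corner_mem (horient : IsOrientation (Sk G k) O) (hcons : Consistent O)
    {c t : Set V × Set V} (hc : c ∈ Sk G k) (ht : t ∈ O)
    (hle : sLe c t) (hne : c ≠ t) (hne' : c ≠ sInv t) : c ∈ O := by
  rcases horient.2.1 c hc with h | h
  · exact h
  by_cases hcc : c = sInv c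
  · rwa [hcc]
  exfalso
  apply hcons
  refine ⟨c, t, ?_, ⟨hle, hne⟩, h, ht⟩
  intro heq
  have : c ∈ ({t, sInv t} : Set (Set V × Set V)) := by
    rw [← heq]; exact Set.mem_insert _ _
  rcases this with h' | h'
  · exact hne h'
  · exact hne' h'

lemma key (hk : 0 < k) (hcard : k ≤ Fintype.card V)
    (horient : IsOrientation (Sk G k) O) (hcons : Consistent O)
    (havoid : Avoids O {σ | σ ∈ Tfam G ∧ IsStarP σ}) :
    ∀ n : ℕ, ∀ x y z : Set V × Set V, x ∈ O → y ∈ O → z ∈ O →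
      Tcond G x y z → mA x + mA y + mA z ≤ n → False := by
  intro n
  induction n using Nat.strong_induction_on with
  | _ n ih =>
  -- the uncrossing step, for a pair witnessing failure of the star property
  have step : ∀ x y z : Set V × Set V, x ∈ O → y ∈ O → z ∈ O →
      Tcond G x y z → ¬ x.1 ⊆ y.2 → mA x + mA y + mA z ≤ n → False := by
    intro x y z hx hy hz htc hns hM
    obtain ⟨hxsep, hxord⟩ := horient.1 hx
    obtain ⟨hysep, hyord⟩ := horient.1 hy
    have hsub : sOrd (x.1 ∩ y.2, x.2 ∪ y.1) + sOrd (y.1 ∩ x.2, y.2 ∪ x.1)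
        ≤ sOrd x + sOrd y := submod x.1 x.2 y.1 y.2
    by_cases h1 : sOrd (x.1 ∩ y.2, x.2 ∪ y.1) < k
    · -- replace x by the corner c = (x.1 ∩ y.2, x.2 ∪ y.1)
      set c : Set V × Set V := (x.1 ∩ y.2, x.2 ∪ y.1) with hc
      have hcsep : GIsSep G c := sep_corner hxsep (sep_inv hysep)
      have hnex : c ≠ x := by
        intro he
        exact hns (Set.inter_eq_left.mp (congrArg Prod.fst he))
      have hnex' : c ≠ sInv x := by
        intro he
        have h2 : x.2 ∪ y.1 = x.1 := congrArg Prod.snd he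
        apply fst_ne_univ hcard horient havoid hx
        apply Set.eq_univ_of_univ_subset
        rw [← hxsep.1]
        intro v hv
        rcases hv with hv | hv
        · exact hv
        · rw [← h2]; exact Or.inl hv
      have hmem : c ∈ O := corner_mem horient hcons ⟨hcsep, h1⟩ hx
        ⟨Set.inter_subset_left, Set.subset_union_left⟩ hnex hnex'
      have htc' : Tcond G c y z := by
        constructor
        · apply Set.eq_univ_of_forall
          intro v
          have hv : v ∈ x.1 ∪ y.1 ∪ z.1 := by rw [htc.1]; trivial
          have hvy : v ∈ y.1 ∪ y.2 := by rw [hysep.1]; trivial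
          simp only [Set.mem_union, Set.mem_inter_iff, hc] at *
          tauto
        · intro u v hadj
          rcases htc.2 u v hadj with ⟨hu, hv⟩ | h | h
          · rcases edge_shift hysep hu hv hadj with h | h
            · exact Or.inl h
            · exact Or.inr (Or.inl h)
          · exact Or.inr (Or.inl h)
          · exact Or.inr (Or.inr h)
      have hlt : mA c + mA y + mA z < mA x + mA y + mA z := by
        have e1 : (x.1 ∩ y.2).ncard < x.1.ncard := by
          apply Set.ncard_lt_ncard _ (Set.toFinite _)
          rw [Set.ssubset_iff_subset_ne]
          exact ⟨Set.inter_subset_left, fun h => hns (Set.inter_eq_left.mp h)⟩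
        have e2 : ((x.2 ∪ y.1)ᶜ).ncard ≤ (x.2ᶜ).ncard :=
          Set.ncard_le_ncard (Set.compl_subset_compl.mpr Set.subset_union_left)
            (Set.toFinite _)
        simp only [mA, hc]
        omega
      exact ih (mA c + mA y + mA z) (lt_of_lt_of_le hlt hM) c y z hmem hy hz htc' le_rfl
    · -- replace y by the corner c = (y.1 ∩ x.2, y.2 ∪ x.1)
      have h2 : sOrd (y.1 ∩ x.2, y.2 ∪ x.1) < k := by omega
      set c : Set V × Set V := (y.1 ∩ x.2, y.2 ∪ x.1) with hc
      have hcsep : GIsSep G c := sep_corner hysep (sep_inv hxsep)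
      have hney : c ≠ y := by
        intro he
        exact hns (Set.union_eq_left.mp (congrArg Prod.snd he))
      have hney' : c ≠ sInv y := by
        intro he
        have hfst : y.1 ∩ x.2 = y.2 := congrArg Prod.fst he
        apply fst_ne_univ hcard horient havoid hy
        apply Set.eq_univ_of_univ_subset
        rw [← hysep.1]
        intro v hv
        rcases hv with hv | hv
        · exact hv
        · rw [← hfst] at hv; exact hv.1
      have hmem : c ∈ O := corner_mem horient hcons ⟨hcsep, h2⟩ hy
        ⟨Set.inter_subset_left, Set.subset_union_left⟩ hney hney'
      have htc' : Tcond G x c z := by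
        constructor
        · apply Set.eq_univ_of_forall
          intro v
          have hv : v ∈ x.1 ∪ y.1 ∪ z.1 := by rw [htc.1]; trivial
          have hvx : v ∈ x.1 ∪ x.2 := by rw [hxsep.1]; trivial
          simp only [Set.mem_union, Set.mem_inter_iff, hc] at *
          tauto
        · intro u v hadj
          rcases htc.2 u v hadj with h | ⟨hu, hv⟩ | h
          · exact Or.inl h
          · rcases edge_shift hxsep hu hv hadj with h | h
            · exact Or.inr (Or.inl h)
            · exact Or.inl h
          · exact Or.inr (Or.inr h)
      have hlt : mA x + mA c + mA z < mA x + mA y + mA z := by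
        have e1 : (y.1 ∩ x.2).ncard ≤ y.1.ncard :=
          Set.ncard_le_ncard Set.inter_subset_left (Set.toFinite _)
        have e2 : ((y.2 ∪ x.1)ᶜ).ncard < (y.2ᶜ).ncard := by
          apply Set.ncard_lt_ncard _ (Set.toFinite _)
          rw [Set.ssubset_iff_subset_ne]
          refine ⟨Set.compl_subset_compl.mpr Set.subset_union_left, fun h => ?_⟩
          exact hns (Set.union_eq_left.mp (compl_injective h))
        simp only [mA, hc]
        omega
      exact ih (mA x + mA c + mA z) (lt_of_lt_of_le hlt hM) x c z hx hmem hz htc' le_rfl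
  intro x y z hx hy hz htc hM
  by_cases hstar : IsStarP ({x, y, z} : Set (Set V × Set V))
  · apply havoid
    refine ⟨{x, y, z}, ⟨⟨x, y, z, (horient.1 hx).1, (horient.1 hy).1, (horient.1 hz).1,
      rfl, htc.1, htc.2⟩, hstar⟩, ?_⟩
    intro p hp
    rcases hp with hp | hp | hp
    · rw [hp]; exact hx
    · rw [hp]; exact hy
    · rw [Set.mem_singleton_iff] at hp; rw [hp]; exact hz
  · have hmemO : ∀ p ∈ ({x, y, z} : Set (Set V × Set V)), p ∈ O := by
      intro p hp
      rcases hp with hp | hp | hp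
      · rw [hp]; exact hx
      · rw [hp]; exact hy
      · rw [Set.mem_singleton_iff] at hp; rw [hp]; exact hz
    have hfirst : ∀ p ∈ ({x, y, z} : Set (Set V × Set V)), p ≠ sInv p :=
      fun p hp => ne_inv hcard horient (hmemO p hp)
    have hB : ¬ ∀ p ∈ ({x, y, z} : Set (Set V × Set V)),
        ∀ q ∈ ({x, y, z} : Set (Set V × Set V)), p ≠ q → sLe p (sInv q) :=
      fun hb => hstar ⟨hfirst, hb⟩
    push_neg at hB
    obtain ⟨p, hp, q, hq, hpq, hnle⟩ := hB
    have hnle' : ¬ p.1 ⊆ q.2 ∨ ¬ q.1 ⊆ p.2 := by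
      rw [sLe] at hnle
      exact not_and_or.mp hnle
    -- reduce to: two distinct members u v of the triple with ¬ u.1 ⊆ v.2
    have main : ∀ u v : Set V × Set V, u ∈ ({x, y, z} : Set (Set V × Set V)) →
        v ∈ ({x, y, z} : Set (Set V × Set V)) → u ≠ v → ¬ u.1 ⊆ v.2 → False := by
      intro u v hu hv huv hns
      have hu' : u = x ∨ u = y ∨ u = z := by simpa using hu
      have hv' : v = x ∨ v = y ∨ v = z := by simpa using hv
      rcases hu' with h | h | h <;> rcases hv' with h' | h' | h' <;>
        rw [h, h'] at hns huv <;>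
        first
        | exact huv rfl
        | exact step x y z hx hy hz htc hns hM
        | exact step x z y hx hz hy (Tcond_swap23 htc) hns
            (by omega : mA x + mA z + mA y ≤ n)
        | exact step y x z hy hx hz (Tcond_swap12 htc) hns
            (by omega : mA y + mA x + mA z ≤ n)
        | exact step y z x hy hz hx (Tcond_swap23 (Tcond_swap12 htc)) hns
            (by omega : mA y + mA z + mA x ≤ n)
        | exact step z x y hz hx hy (Tcond_swap12 (Tcond_swap23 htc)) hns
            (by omega : mA z + mA x + mA y ≤ n)
        | exact step z y x hz hy hx (Tcond_swap23 (Tcond_swap12 (Tcond_swap23 htc))) hns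
            (by omega : mA z + mA y + mA x ≤ n)
    rcases hnle' with h | h
    · exact main p q hp hq hpq h
    · exact main q p hq hp (Ne.symm hpq) h

end main

/-- For a graph `G` with `|V(G)| ≥ k > 0`: every consistent
orientation `O` of `S_k` avoiding the family `T*` of stars in `T` also
avoids `T`. -/
theorem Tstar_avoiding_avoids_T {V : Type*} [Fintype V] (G : SimpleGraph V)
    (k : ℕ) (hk : 0 < k) (hcard : k ≤ Fintype.card V)
    (O : Set (Set V × Set V))
    (horient : IsOrientation (Sk G k) O)
    (hcons : Consistent O)
    (havoid : Avoids O {σ | σ ∈ Tfam G ∧ IsStarP σ}) :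
    Avoids O (Tfam G) := by
  rintro ⟨σ, ⟨p₁, p₂, p₃, h1, h2, h3, hσ, hcov, hedge⟩, hσO⟩
  subst hσ
  have hp₁ : p₁ ∈ O := hσO (Set.mem_insert _ _)
  have hp₂ : p₂ ∈ O := hσO (Set.mem_insert_of_mem _ (Set.mem_insert _ _))
  have hp₃ : p₃ ∈ O := hσO (Set.mem_insert_of_mem _
    (Set.mem_insert_of_mem _ (Set.mem_singleton _)))
  exact key hk hcard horient hcons havoid (mA p₁ + mA p₂ + mA p₃) p₁ p₂ p₃
    hp₁ hp₂ hp₃ ⟨hcov, hedge⟩ le_rfl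
end

section
/- A finite graph G has a bramble of order at least k if and only if G has an F_k-tangle of S_k, i.e., a consistent orientation of the vertex separations of order < k with no subset in F_k. -/
variable {V : Type*}

/-- The family `F_k`: stars of vertex separations `{(Aᵢ,Bᵢ)}` with
`|⋂ᵢ Bᵢ| < k`. -/
def FkFam (G : SimpleGraph V) (k : ℕ) : Set (Set (Set V × Set V)) :=
  {σ | IsStarP σ ∧ (∀ p ∈ σ, GIsSep G p) ∧ (⋂ p ∈ σ, p.2).ncard < k}

/-!
A bramble of order `≥ k` orients each separation `(A, B)` of order `< k` towards the side
`B \ A` that contains one of its elements: some element misses `A ∩ B` and so, being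
connected, lies in `A \ B` or in `B \ A`, and two elements on opposite sides could not touch.
The same argument, applied to the interior `⋂ Bᵢ` of a star `{(Aᵢ, Bᵢ)}`, shows that no star
of `F_k` in the orientation can exist, and consistency is immediate.

Conversely, a tangle `O` gives the bramble of connected sets `C` with `(Cᶜ, C ∪ N(C)) ∈ O`.
If two of them, `C` and `D`, did not touch, then `(C ∪ N(C), Cᶜ) ≤ (Dᶜ, D ∪ N(D))` would
contradict consistency. If `|X| < k`, the separations `(D ∪ N(D), Dᶜ)` for the components `D`
of `G - X` have order `≤ |X|` and form a star with interior inside `X`; since `O` avoids `F_k`,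
it contains the inverse of one of them, and that `D` is an element of the bramble missing `X`.
-/

namespace SimpleGraph

variable {G : SimpleGraph V}

def Touches (G : SimpleGraph V) (C D : Set V) : Prop :=
  (C ∩ D).Nonempty ∨ ∃ u ∈ C, ∃ v ∈ D, G.Adj u v

theorem touches_comm {C D : Set V} : G.Touches C D ↔ G.Touches D C := by
  unfold Touches
  rw [Set.inter_comm]
  exact or_congr Iff.rfl ⟨fun ⟨u, hu, v, hv, h⟩ => ⟨v, hv, u, hu, h.symm⟩,
    fun ⟨u, hu, v, hv, h⟩ => ⟨v, hv, u, hu, h.symm⟩⟩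

theorem subset_of_preconnected_induce {C P : Set V} (hC : (G.induce C).Preconnected)
    {x : V} (hxC : x ∈ C) (hxP : x ∈ P)
    (hP : ∀ u ∈ C, ∀ v ∈ C, G.Adj u v → u ∈ P → v ∈ P) : C ⊆ P := by
  have walk_closed : ∀ {a b : C} (w : (G.induce C).Walk a b), a.1 ∈ P → b.1 ∈ P := by
    intro a b w
    induction w with
    | nil => exact id
    | cons h _ ih => exact fun ha => ih (hP _ (Subtype.prop _) _ (Subtype.prop _) h ha)
  exact fun y hy => walk_closed (hC ⟨x, hxC⟩ ⟨y, hy⟩).some hxP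

def outerBoundary (G : SimpleGraph V) (C : Set V) : Set V :=
  {w | w ∉ C ∧ ∃ u ∈ C, G.Adj u w}

def sepAround (G : SimpleGraph V) (C : Set V) : Set V × Set V :=
  (C ∪ G.outerBoundary C, Cᶜ)

theorem gIsSep_sepAround (C : Set V) : GIsSep G (G.sepAround C) := by
  refine ⟨Set.eq_univ_of_forall fun v => (em (v ∈ C)).imp (Or.inl ·) id, ?_⟩
  intro a b _ ha _ hb hab
  exact hb (Or.inr ⟨fun hbC => hb (Or.inl hbC), a, not_not.1 ha, hab⟩)

theorem sOrd_sepAround (C : Set V) : sOrd (G.sepAround C) = (G.outerBoundary C).ncard := by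
  have : (C ∪ G.outerBoundary C) ∩ Cᶜ = G.outerBoundary C := by
    ext w
    constructor
    · rintro ⟨hw | hw, hwC⟩
      exacts [absurd hw hwC, hw]
    · exact fun hw => ⟨Or.inr hw, hw.1⟩
  simp only [sOrd, sepAround, this]

theorem sepAround_ne_sInv {C : Set V} (hC : C.Nonempty) :
    G.sepAround C ≠ sInv (G.sepAround C) := by
  obtain ⟨c, hc⟩ := hC
  intro h
  have hc' : c ∈ (G.sepAround C).1 := Or.inl hc
  rw [h] at hc'
  exact hc' hc

theorem disjoint_union_outerBoundary_of_not_touches {C D : Set V} (h : ¬ G.Touches C D) :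
    Disjoint (C ∪ G.outerBoundary C) D := by
  rw [Set.disjoint_union_left]
  refine ⟨Set.disjoint_iff_inter_eq_empty.2 (Set.not_nonempty_iff_eq_empty.1 (h ∘ Or.inl)), ?_⟩
  rw [Set.disjoint_left]
  rintro w ⟨-, u, hu, huw⟩ hw
  exact h (Or.inr ⟨u, hu, w, hw, huw⟩)

theorem sLe_sepAround_sInv_of_not_touches {C D : Set V} (h : ¬ G.Touches C D) :
    sLe (G.sepAround C) (sInv (G.sepAround D)) :=
  ⟨Set.subset_compl_iff_disjoint_right.2 (disjoint_union_outerBoundary_of_not_touches h),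
    Set.subset_compl_iff_disjoint_right.2
      (disjoint_union_outerBoundary_of_not_touches (touches_comm.not.1 h))⟩

theorem ComponentCompl.connected_induce {K : Set V} (C : G.ComponentCompl K) :
    (G.induce (C : Set V)).Connected := by
  let f : C.toSimpleGraph →g G.induce (C : Set V) :=
    ⟨fun x => ⟨x.1.1, x.1.2, x.2⟩, fun h => h⟩
  refine C.connected_toSimpleGraph.map f ?_
  rintro ⟨v, hvK, hvC⟩
  exact ⟨⟨⟨v, hvK⟩, hvC⟩, rfl⟩

theorem ComponentCompl.outerBoundary_subset {X : Set V} (D : G.ComponentCompl X) :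
    G.outerBoundary D ⊆ X := fun w ⟨hwD, u, hu, huw⟩ =>
  by_contra fun hwX => hwD (mem_of_adj u w hu hwX huw)

theorem ComponentCompl.not_touches_of_ne {X : Set V} {D D' : G.ComponentCompl X}
    (h : D ≠ D') : ¬ G.Touches D D' := by
  have hdisj := ComponentCompl.pairwise_disjoint h
  rintro (hDD' | ⟨u, hu, v, hv, huv⟩)
  · exact Set.not_nonempty_iff_eq_empty.2 (Set.disjoint_iff_inter_eq_empty.1 hdisj) hDD'
  · exact Set.disjoint_left.1 hdisj (mem_of_adj u v hu (notMem_of_mem hv) huv) hv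

end SimpleGraph

open SimpleGraph

section Separations

variable {G : SimpleGraph V} {p : Set V × Set V}

theorem GIsSep.inv (hp : GIsSep G p) : GIsSep G (sInv p) :=
  ⟨(Set.union_comm _ _).trans hp.1, fun a b ha ha' hb hb' hab => hp.2 b a hb hb' ha ha' hab.symm⟩

theorem sInv_mem_Sk {k : ℕ} (hp : p ∈ Sk G k) : sInv p ∈ Sk G k :=
  ⟨hp.1.inv, by rw [sOrd, Set.inter_comm]; exact hp.2⟩

theorem GIsSep.mem_sdiff_of_adj (hp : GIsSep G p) {u v : V} (hu : u ∈ p.1 \ p.2)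
    (hv : v ∉ p.1 ∩ p.2) (huv : G.Adj u v) : v ∈ p.1 \ p.2 := by
  have hv' : v ∈ p.1 ∪ p.2 := hp.1 ▸ Set.mem_univ v
  by_cases hv1 : v ∈ p.1
  · exact ⟨hv1, fun hv2 => hv ⟨hv1, hv2⟩⟩
  · exact absurd huv (hp.2 u v hu.1 hu.2 (hv'.resolve_left hv1) hv1)

theorem GIsSep.not_touches (hp : GIsSep G p) {C D : Set V} (hC : C ⊆ p.1 \ p.2)
    (hD : D ⊆ p.2 \ p.1) : ¬ G.Touches C D := by
  rintro (⟨u, huC, huD⟩ | ⟨u, hu, v, hv, huv⟩)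
  · exact (hC huC).2 (hD huD).1
  · exact hp.2 u v (hC hu).1 (hC hu).2 (hD hv).1 (hD hv).2 huv

theorem GIsSep.subset_sdiff_or_subset_sdiff (hp : GIsSep G p) {C : Set V}
    (hC : (G.induce C).Connected) (hCp : Disjoint C (p.1 ∩ p.2)) :
    C ⊆ p.1 \ p.2 ∨ C ⊆ p.2 \ p.1 := by
  obtain ⟨⟨x, hx⟩⟩ := hC.nonempty
  have closed : ∀ {q : Set V × Set V}, GIsSep G q → q.1 ∩ q.2 ⊆ p.1 ∩ p.2 →
      ∀ u ∈ C, ∀ v ∈ C, G.Adj u v → u ∈ q.1 \ q.2 → v ∈ q.1 \ q.2 :=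
    fun hq hqp _ _ v hv huv hu =>
      hq.mem_sdiff_of_adj hu (fun hv' => Set.disjoint_left.1 hCp hv (hqp hv')) huv
  have hx' : x ∈ p.1 ∪ p.2 := hp.1 ▸ Set.mem_univ x
  have hxp : x ∉ p.1 ∩ p.2 := Set.disjoint_left.1 hCp hx
  rcases hx' with hx1 | hx2
  · exact .inl (subset_of_preconnected_induce hC.preconnected hx
      ⟨hx1, fun hx2 => hxp ⟨hx1, hx2⟩⟩ (closed hp subset_rfl))
  · exact .inr (subset_of_preconnected_induce hC.preconnected hx
      ⟨hx2, fun hx1 => hxp ⟨hx1, hx2⟩⟩ (closed hp.inv (Set.inter_comm _ _).le))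

theorem IsStarP.exists_subset_sdiff {σ : Set (Set V × Set V)} (hσ : IsStarP σ)
    (hsep : ∀ p ∈ σ, GIsSep G p) {C : Set V} (hC : (G.induce C).Connected)
    (hCσ : Disjoint C (⋂ p ∈ σ, p.2)) : ∃ p ∈ σ, C ⊆ p.1 \ p.2 := by
  have outside : ∀ v ∈ C, ∃ p ∈ σ, v ∈ p.1 \ p.2 := by
    intro v hv
    obtain ⟨p, hp, hvp⟩ : ∃ p ∈ σ, v ∉ p.2 := by
      simpa using Set.disjoint_left.1 hCσ hv
    exact ⟨p, hp, ((hsep p hp).1 ▸ Set.mem_univ v : v ∈ p.1 ∪ p.2).resolve_right hvp, hvp⟩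
  obtain ⟨⟨x, hx⟩⟩ := hC.nonempty
  obtain ⟨p, hp, hxp⟩ := outside x hx
  refine ⟨p, hp, subset_of_preconnected_induce hC.preconnected hx hxp ?_⟩
  intro u _ v hv huv hu
  obtain ⟨q, hq, hvq⟩ := outside v hv
  by_cases hqp : q = p
  · exact hqp ▸ hvq
  -- the star condition gives `p.1 ⊆ q.2`, so `v ∉ p.1`
  have hle := hσ.2 q hq p hp hqp
  exact (hsep p hp).mem_sdiff_of_adj hu (fun hv' => hvq.2 (hle.2 hv'.1)) huv

end Separations

theorem le_ncard_of_forall_inter_nonempty_iff {Br : Set (Set V)} {k : ℕ} :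
    (∀ X : Set V, (∀ C ∈ Br, (C ∩ X).Nonempty) → k ≤ X.ncard) ↔
      ∀ X : Set V, X.ncard < k → ∃ C ∈ Br, Disjoint C X := by
  simp only [← Set.not_disjoint_iff_nonempty_inter]
  exact forall_congr' fun X => by contrapose!; exact and_comm

section BrambleToTangle

variable {G : SimpleGraph V} {k : ℕ} {Br : Set (Set V)}

def brambleOrientation (G : SimpleGraph V) (k : ℕ) (Br : Set (Set V)) :
    Set (Set V × Set V) :=
  {p | p ∈ Sk G k ∧ ∃ C ∈ Br, C ⊆ p.2 \ p.1}

theorem isOrientation_brambleOrientation (hconn : ∀ C ∈ Br, (G.induce C).Connected)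
    (htouch : ∀ C ∈ Br, ∀ D ∈ Br, G.Touches C D)
    (hsmall : ∀ X : Set V, X.ncard < k → ∃ C ∈ Br, Disjoint C X) :
    IsOrientation (Sk G k) (brambleOrientation G k Br) := by
  refine ⟨fun p hp => hp.1, fun p hp => ?_, ?_⟩
  · obtain ⟨C, hC, hCp⟩ := hsmall _ hp.2
    rcases hp.1.subset_sdiff_or_subset_sdiff (hconn C hC) hCp with hCp | hCp
    · exact .inr ⟨sInv_mem_Sk hp, C, hC, hCp⟩
    · exact .inl ⟨hp, C, hC, hCp⟩
  · rintro p ⟨hp, C, hC, hCp⟩ - ⟨-, D, hD, hDp⟩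
    exact hp.1.not_touches hDp hCp (htouch D hD C hC)

theorem consistent_brambleOrientation (htouch : ∀ C ∈ Br, ∀ D ∈ Br, G.Touches C D) :
    Consistent (brambleOrientation G k Br) := by
  rintro ⟨p, q, -, ⟨hpq, -⟩, ⟨-, C, hC, hCp⟩, ⟨hq, D, hD, hDq⟩⟩
  have hCq : C ⊆ q.1 \ q.2 := fun u hu =>
    ⟨hpq.1 (hCp hu).1, fun hu2 => (hCp hu).2 (hpq.2 hu2)⟩
  exact hq.1.not_touches hCq hDq (htouch C hC D hD)

theorem avoids_brambleOrientation (hconn : ∀ C ∈ Br, (G.induce C).Connected)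
    (htouch : ∀ C ∈ Br, ∀ D ∈ Br, G.Touches C D)
    (hsmall : ∀ X : Set V, X.ncard < k → ∃ C ∈ Br, Disjoint C X) :
    Avoids (brambleOrientation G k Br) (FkFam G k) := by
  rintro ⟨σ, ⟨hσ, hsep, hord⟩, hσO⟩
  obtain ⟨C, hC, hCσ⟩ := hsmall _ hord
  obtain ⟨p, hp, hCp⟩ := hσ.exists_subset_sdiff hsep (hconn C hC) hCσ
  obtain ⟨-, D, hD, hDp⟩ := hσO hp
  exact (hsep p hp).not_touches hCp hDp (htouch C hC D hD)

end BrambleToTangle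

section TangleToBramble

variable {G : SimpleGraph V} {k : ℕ} {O : Set (Set V × Set V)}

theorem Consistent.false_of_sLe (hcons : Consistent O)
    (hanti : ∀ p ∈ O, p ≠ sInv p → sInv p ∉ O) {p q : Set V × Set V}
    (hp : sInv p ∈ O) (hq : q ∈ O) (hpq : sLe p q) (hpp : p ≠ sInv p) (hpq' : p ≠ sInv q) :
    False := by
  by_cases heq : p = q
  · exact hanti (sInv p) hp (Ne.symm hpp) (heq ▸ hq)
  refine hcons ⟨p, q, fun h => ?_, ⟨hpq, heq⟩, hp, hq⟩
  have : p ∈ ({q, sInv q} : Set (Set V × Set V)) := h ▸ Set.mem_insert p _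
  exact this.elim heq hpq'

def tangleBramble (G : SimpleGraph V) (O : Set (Set V × Set V)) : Set (Set V) :=
  {C | (G.induce C).Connected ∧ sInv (G.sepAround C) ∈ O}

theorem touches_of_mem_tangleBramble (hO : IsOrientation (Sk G k) O) (hcons : Consistent O)
    {C D : Set V} (hC : C ∈ tangleBramble G O) (hD : D ∈ tangleBramble G O) :
    G.Touches C D := by
  obtain ⟨c, hc⟩ := Set.nonempty_coe_sort.1 hC.1.nonempty
  by_contra h
  refine hcons.false_of_sLe hO.2.2 hC.2 hD.2 (sLe_sepAround_sInv_of_not_touches h)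
    (sepAround_ne_sInv ⟨c, hc⟩) fun hCD => h (.inl ⟨c, hc, ?_⟩)
  have : Cᶜ = Dᶜ := congrArg Prod.snd hCD
  exact compl_injective this ▸ hc

theorem isStarP_range_sepAround (X : Set V) :
    IsStarP (Set.range fun D : G.ComponentCompl X => G.sepAround D) := by
  refine ⟨?_, ?_⟩
  · rintro _ ⟨D, rfl⟩
    exact sepAround_ne_sInv D.nonempty
  · rintro _ ⟨D, rfl⟩ _ ⟨D', rfl⟩ hne
    exact sLe_sepAround_sInv_of_not_touches (ComponentCompl.not_touches_of_ne (hne <| · ▸ rfl))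

theorem biInter_range_sepAround_subset (G : SimpleGraph V) (X : Set V) :
    ⋂ p ∈ Set.range fun D : G.ComponentCompl X => G.sepAround D, p.2 ⊆ X := by
  rw [Set.biInter_range]
  intro v hv
  by_contra hvX
  exact Set.mem_iInter.1 hv (G.componentComplMk hvX) (G.componentComplMk_mem hvX)

theorem exists_mem_tangleBramble_disjoint [Finite V] (hO : IsOrientation (Sk G k) O)
    (hav : Avoids O (FkFam G k)) {X : Set V} (hX : X.ncard < k) :
    ∃ C ∈ tangleBramble G O, Disjoint C X := by
  by_contra! hX'
  have hmem : ∀ D : G.ComponentCompl X, G.sepAround D ∈ O := by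
    intro D
    have hord : sOrd (G.sepAround D) < k := by
      rw [sOrd_sepAround]
      exact (Set.ncard_le_ncard D.outerBoundary_subset).trans_lt hX
    refine (hO.2.1 _ ⟨gIsSep_sepAround _, hord⟩).resolve_right fun hD => ?_
    exact hX' D ⟨D.connected_induce, hD⟩ D.disjoint_right.symm
  refine hav ⟨_, ⟨isStarP_range_sepAround X, ?_, ?_⟩, Set.range_subset_iff.2 hmem⟩
  · rintro _ ⟨D, rfl⟩
    exact gIsSep_sepAround _
  · exact (Set.ncard_le_ncard (biInter_range_sepAround_subset G X)).trans_lt hX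

end TangleToBramble

theorem bramble_iff_Fk_tangle_general {V : Type*} [Fintype V] (G : SimpleGraph V)
    (k : ℕ) :
    (∃ Br : Set (Set V),
      (∀ C ∈ Br, C.Nonempty ∧ (G.induce C).Connected) ∧
      (∀ C ∈ Br, ∀ D ∈ Br,
        (C ∩ D).Nonempty ∨ ∃ u ∈ C, ∃ v ∈ D, G.Adj u v) ∧
      (∀ X : Set V, (∀ C ∈ Br, (C ∩ X).Nonempty) → k ≤ X.ncard)) ↔
    (∃ O : Set (Set V × Set V),
      IsOrientation (Sk G k) O ∧ Consistent O ∧ Avoids O (FkFam G k)) := by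
  constructor
  · rintro ⟨Br, hBr, htouch, horder⟩
    have hconn : ∀ C ∈ Br, (G.induce C).Connected := fun C hC => (hBr C hC).2
    have hsmall := le_ncard_of_forall_inter_nonempty_iff.1 horder
    exact ⟨brambleOrientation G k Br, isOrientation_brambleOrientation hconn htouch hsmall,
      consistent_brambleOrientation htouch, avoids_brambleOrientation hconn htouch hsmall⟩
  · rintro ⟨O, hO, hcons, hav⟩
    refine ⟨tangleBramble G O, fun C hC => ⟨Set.nonempty_coe_sort.1 hC.1.nonempty, hC.1⟩,
      fun C hC D hD => touches_of_mem_tangleBramble hO hcons hC hD, ?_⟩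
    exact le_ncard_of_forall_inter_nonempty_iff.2 fun X hX =>
      exists_mem_tangleBramble_disjoint hO hav hX

/-- A finite graph `G` has a bramble of order at least `k`
(a set of pairwise touching connected vertex sets such that every vertex set
meeting all of them has at least `k` vertices) if and only if `G` has an
`F_k`-tangle of `S_k`: a consistent orientation of the vertex separations of
order `< k` with no subset in `F_k`. -/
theorem bramble_iff_Fk_tangle {V : Type*} [Fintype V] (G : SimpleGraph V)
    (k : ℕ) (hk : 0 < k) :
    (∃ Br : Set (Set V),
      (∀ C ∈ Br, C.Nonempty ∧ (G.induce C).Connected) ∧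
      (∀ C ∈ Br, ∀ D ∈ Br,
        (C ∩ D).Nonempty ∨ ∃ u ∈ C, ∃ v ∈ D, G.Adj u v) ∧
      (∀ X : Set V, (∀ C ∈ Br, (C ∩ X).Nonempty) → k ≤ X.ncard)) ↔
    (∃ O : Set (Set V × Set V),
      IsOrientation (Sk G k) O ∧ Consistent O ∧ Avoids O (FkFam G k)) :=
  bramble_iff_Fk_tangle_general G k
end

section
/- Let M be a matroid with rank function r and let σ = {(A_i, B_i) : i = 0,…,n} be a star of bipartitions of the ground set E (i.e., A_i ⊆ B_j for i ≠ j, with B_i = E \ A_i). Then for each i, λ(A_i) ≤ r(M) + Σ_{j=0}^{n} (r(B_j) − r(M)), where λ(X) = r(X) + r(E \ X) − r(M) is the connectivity function. In particular, if the star σ lies in F_k = {stars with r(M) + Σ(r(B_i) − r(M)) < k}, then every (A_i, B_i) has λ(A_i) < k. -/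
theorem star_inter_rank {E : Type*} {ι : Type*} [DecidableEq ι] (r : Set E → ℕ)
    (hsubmod : ∀ X Y : Set E, r (X ∩ Y) + r (X ∪ Y) ≤ r X + r Y)
    (B : ι → Set E)
    (hcov : ∀ i j : ι, i ≠ j → B i ∪ B j = Set.univ) :
    ∀ S : Finset ι,
      (r (⋂ j ∈ S, B j) : ℤ) + ((S.card : ℤ) - 1) * r Set.univ ≤
        ∑ j ∈ S, (r (B j) : ℤ) := by
  intro S
  induction S using Finset.induction_on with
  | empty => simp
  | @insert a S ha ih =>
    have hU : B a ∪ ⋂ j ∈ S, B j = Set.univ := by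
      ext x
      simp only [Set.mem_union, Set.mem_iInter, Set.mem_univ, iff_true]
      by_cases hx : x ∈ B a
      · exact Or.inl hx
      · refine Or.inr fun j hj => ?_
        have := hcov j a (by rintro rfl; exact ha hj)
        have : x ∈ B j ∪ B a := this ▸ Set.mem_univ x
        rcases this with h | h
        · exact h
        · exact absurd h hx
    have hsub := hsubmod (B a) (⋂ j ∈ S, B j)
    rw [hU] at hsub
    rw [Finset.sum_insert ha, Finset.card_insert_of_notMem ha]
    rw [Finset.set_biInter_insert]
    push_cast
    linarith


/-- Let `M` be a finite matroid with (submodular, monotone)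
rank function `r`, and let `σ = {(Aᵢ, Bᵢ) : i = 0,…,n}` be a star of
bipartitions of the ground set `E` (so `Bᵢ = E \ Aᵢ` and `Aᵢ ⊆ Bⱼ` for
`i ≠ j`).  Then for each `i`,
`λ(Aᵢ) ≤ r(M) + Σⱼ (r(Bⱼ) − r(M))`,
where `λ(X) = r(X) + r(E \ X) − r(M)` is the connectivity function.
In particular, if `⟨σ⟩ = r(M) + Σⱼ (r(Bⱼ) − r(M)) < k`, then every `(Aᵢ,Bᵢ)`
has `λ(Aᵢ) < k`, i.e. `σ ⊆ S⃗_k`. -/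
theorem matroid_star_in_Sk {E : Type*} [Fintype E] (r : Set E → ℕ)
    (hsubmod : ∀ X Y : Set E, r (X ∩ Y) + r (X ∪ Y) ≤ r X + r Y)
    (hmono : ∀ X Y : Set E, X ⊆ Y → r X ≤ r Y)
    (n : ℕ) (A : Fin (n + 1) → Set E)
    (hstar : ∀ i j : Fin (n + 1), i ≠ j → A i ⊆ (A j)ᶜ) :
    (∀ i : Fin (n + 1),
      (r (A i) : ℤ) + (r ((A i)ᶜ) : ℤ) - (r Set.univ : ℤ) ≤
        (r Set.univ : ℤ) +
          ∑ j : Fin (n + 1), ((r ((A j)ᶜ) : ℤ) - (r Set.univ : ℤ))) ∧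
    (∀ k : ℤ,
      (r Set.univ : ℤ) +
          ∑ j : Fin (n + 1), ((r ((A j)ᶜ) : ℤ) - (r Set.univ : ℤ)) < k →
      ∀ i : Fin (n + 1),
        (r (A i) : ℤ) + (r ((A i)ᶜ) : ℤ) - (r Set.univ : ℤ) < k) := by
  have hcov : ∀ i j : Fin (n + 1), i ≠ j → (A i)ᶜ ∪ (A j)ᶜ = Set.univ := by
    intro i j hij
    have hE : A i ∩ A j = ∅ := Set.eq_empty_of_subset_empty (by
      intro x hx
      exact (hstar i j hij hx.1) hx.2)
    rw [← Set.compl_inter, hE, Set.compl_empty]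
  have key : ∀ i : Fin (n + 1),
      (r (A i) : ℤ) + (r ((A i)ᶜ) : ℤ) - (r Set.univ : ℤ) ≤
        (r Set.univ : ℤ) +
          ∑ j : Fin (n + 1), ((r ((A j)ᶜ) : ℤ) - (r Set.univ : ℤ)) := by
    intro i
    set T : Finset (Fin (n + 1)) := Finset.univ.erase i with hT
    have hAi : A i ⊆ ⋂ j ∈ T, (A j)ᶜ := by
      intro x hx
      simp only [Set.mem_iInter]
      intro j hj
      exact hstar i j (Finset.ne_of_mem_erase hj).symm hx
    have h1 : (r (A i) : ℤ) ≤ r (⋂ j ∈ T, (A j)ᶜ) := by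
      exact_mod_cast hmono _ _ hAi
    have h2 := star_inter_rank r hsubmod (fun j => (A j)ᶜ) hcov T
    have hcard : (T.card : ℤ) = n := by
      rw [hT, Finset.card_erase_of_mem (Finset.mem_univ i)]
      simp
    have hsumT : ∑ j ∈ T, (r ((A j)ᶜ) : ℤ)
        = (∑ j : Fin (n + 1), (r ((A j)ᶜ) : ℤ)) - r ((A i)ᶜ) := by
      rw [hT, Finset.sum_erase_eq_sub (Finset.mem_univ i)]
    rw [Finset.sum_sub_distrib, Finset.sum_const, Finset.card_univ, Fintype.card_fin]
    rw [hcard, hsumT] at h2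
    simp only [nsmul_eq_mul] at *
    push_cast at h2 ⊢
    ring_nf at h2 ⊢
    linarith
  refine ⟨key, fun k hk i => lt_of_le_of_lt (key i) hk⟩
end

section
/- Let G be a graph, k > 0, and suppose (X,Y) ∈ S⃗_k emulates a nontrivial nondegenerate r ∈ S⃗_k in S⃗_k (i.e., r ≤ (X,Y) and for every (A,B) ∈ S⃗_k with r ≤ (A,B), (A,B) ≠ r*, we have (A∪X, B∩Y) ∈ S⃗_k). Let σ = {(A_i,B_i) : i = 0,…,n} ⊆ S⃗_{≥r} \ {r*} be a star in F_k with r ≤ (A₀,B₀), where F_k consists of stars with |⋂_i B_i| < k. Then the shifted star σ' = {(A₀∪X, B₀∩Y)} ∪ {(A_i∩Y, B_i∪X) : i ≥ 1} also lies in F_k, i.e., |(B₀∩Y) ∩ ⋂_{i≥1}(B_i∪X)| < k. -/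
variable {V : Type*}

/-- `p` is trivial in the separation system `S`: some `q ∈ S` with distinct
underlying separation satisfies `p < q` and `p < q*`. -/
def TrivialInP (S : Set (Set V × Set V)) (p : Set V × Set V) : Prop :=
  ∃ q ∈ S, ({q, sInv q} : Set (Set V × Set V)) ≠ {p, sInv p} ∧
    sLt p q ∧ sLt p (sInv q)

/-- (`F_k` is closed under shifting in `S⃗_k`.)
Let `(X,Y) ∈ S⃗_k` emulate a nontrivial nondegenerate `r ∈ S⃗_k` in `S⃗_k`,
and let `σ = {(Aᵢ,Bᵢ) : i = 0,…,n} ⊆ S⃗_{≥r} \ {r*}` be a star with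
`r ≤ (A₀,B₀)` and `|⋂ᵢ Bᵢ| < k` (i.e. `σ ∈ F_k`).  Then the shifted star
`σ' = {(A₀∪X, B₀∩Y)} ∪ {(Aᵢ∩Y, Bᵢ∪X) : i ≥ 1}` also lies in `F_k`:
`|(B₀∩Y) ∩ ⋂_{i≥1} (Bᵢ∪X)| < k`. -/
theorem Fk_closed_under_shifting {V : Type*} [Fintype V] (G : SimpleGraph V)
    (k : ℕ) (hk : 0 < k)
    (X Y : Set V) (hXY : (X, Y) ∈ Sk G k)
    (r : Set V × Set V) (hr : r ∈ Sk G k)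
    (hrnontriv : ¬ TrivialInP (Sk G k) r) (hrnondeg : r ≠ sInv r)
    (hrXY : sLe r (X, Y))
    (hemul : ∀ p ∈ Sk G k, p ≠ sInv r → sLe r p → (p.1 ∪ X, p.2 ∩ Y) ∈ Sk G k)
    (n : ℕ) (A B : Fin (n + 1) → Set V)
    (hmem : ∀ i, (A i, B i) ∈ Sk G k)
    (hdom : ∀ i, (sLe r (A i, B i) ∨ sLe r (B i, A i)) ∧ (A i, B i) ≠ sInv r)
    (hnondeg : ∀ i, (A i, B i) ≠ sInv (A i, B i))
    (hstar : ∀ i j, i ≠ j → sLe (A i, B i) (sInv (A j, B j)))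
    (h0 : sLe r (A 0, B 0))
    (hFk : (⋂ i, B i).ncard < k) :
    ((B 0 ∩ Y) ∩ ⋂ i : Fin (n + 1), ⋂ (_ : i ≠ 0), (B i ∪ X)).ncard < k := by

  classical
  set I : Set V := ⋂ i, B i with hIdef
  -- `I ⊆ B 0`
  have hIB0 : I ⊆ B 0 := Set.iInter_subset _ 0
  -- `A 0 ∩ B 0 ⊆ I` by the star property
  have hA0B0I : A 0 ∩ B 0 ⊆ I := by
    intro v hv
    refine Set.mem_iInter.2 fun i => ?_
    by_cases hi : i = 0
    · subst hi; exact hv.2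
    · exact (hstar 0 i (fun h => hi h.symm)).1 hv.1
  -- the target set is contained in `(A 0 ∪ I ∪ X) ∩ (B 0 ∩ Y)`
  have hsub : (B 0 ∩ Y) ∩ ⋂ i : Fin (n + 1), ⋂ (_ : i ≠ 0), (B i ∪ X) ⊆
      ((A 0 ∪ I ∪ X) ∩ (B 0 ∩ Y)) := by
    intro v hv
    obtain ⟨hv1, hv2⟩ := hv
    refine ⟨?_, hv1⟩
    by_cases hvX : v ∈ X
    · exact Or.inr hvX
    · refine Or.inl (Or.inr (Set.mem_iInter.2 fun i => ?_))
      by_cases hi : i = 0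
      · subst hi; exact hv1.1
      · rcases Set.mem_iInter.1 (Set.mem_iInter.1 hv2 i) hi with h | h
        · exact h
        · exact absurd h hvX
  -- the bounding set is small
  have hbound : ((A 0 ∪ I ∪ X) ∩ (B 0 ∩ Y)).ncard < k := by
    by_cases hq : ((A 0 ∪ I, B 0) : Set V × Set V) = sInv r
    · -- degenerate case: then `B 0 = r.1 ⊆ X`, so the set is inside `X ∩ Y`
      have hB0 : B 0 = r.1 := congrArg Prod.snd hq
      have hsub' : (A 0 ∪ I ∪ X) ∩ (B 0 ∩ Y) ⊆ X ∩ Y := by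
        intro v hv
        exact ⟨hrXY.1 (hB0 ▸ hv.2.1), hv.2.2⟩
      calc ((A 0 ∪ I ∪ X) ∩ (B 0 ∩ Y)).ncard ≤ (X ∩ Y).ncard :=
            Set.ncard_le_ncard hsub' (Set.toFinite _)
        _ < k := hXY.2
    · -- main case: apply `hemul` to `q = (A 0 ∪ I, B 0)`
      have hsep0 := (hmem 0).1
      have hqsep : GIsSep G ((A 0 ∪ I, B 0) : Set V × Set V) := by
        constructor
        · apply Set.eq_univ_of_univ_subset
          rw [← hsep0.1]
          intro v hv
          rcases hv with h | h
          · exact Or.inl (Or.inl h)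
          · exact Or.inr h
        · intro a b ha ha' hb hb'
          rcases ha with h | h
          · exact hsep0.2 a b h ha' hb (fun hb0 => hb' (Or.inl hb0))
          · exact absurd (hIB0 h) ha'
      have hqord : sOrd ((A 0 ∪ I, B 0) : Set V × Set V) < k := by
        have : (A 0 ∪ I) ∩ B 0 ⊆ I := by
          intro v hv
          rcases hv.1 with h | h
          · exact hA0B0I ⟨h, hv.2⟩
          · exact h
        calc ((A 0 ∪ I) ∩ B 0).ncard ≤ I.ncard :=
              Set.ncard_le_ncard this (Set.toFinite _)
          _ < k := hFk
      have hqSk : ((A 0 ∪ I, B 0) : Set V × Set V) ∈ Sk G k := ⟨hqsep, hqord⟩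
      have hqle : sLe r (A 0 ∪ I, B 0) :=
        ⟨h0.1.trans Set.subset_union_left, h0.2⟩
      have := (hemul _ hqSk hq hqle).2
      simpa [sOrd, Set.union_assoc] using this
  calc ((B 0 ∩ Y) ∩ ⋂ i : Fin (n + 1), ⋂ (_ : i ≠ 0), (B i ∪ X)).ncard
      ≤ ((A 0 ∪ I ∪ X) ∩ (B 0 ∩ Y)).ncard := Set.ncard_le_ncard hsub (Set.toFinite _)
    _ < k := hbound
end
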